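/- If f is holomorphic on ℂ \ {0} and satisfies e^{-iα} f(z) = f(e^{iα} z) for all z ≠ 0 and all α ∈ (0, π), then there exists a complex constant c such that f(z) = c / z for all z ≠ 0. -/

import Mathlib

/-!
The rotation rule makes `g z = z * f z` satisfy `g (exp (I * α)) = g 1` for all small `α > 0`,
so `g` is constant on an arc accumulating at `1`; by the identity theorem on the connected
set `ℂ \ {0}`, `g` is constant there.
-/

open Complex Filter Topology Set

theorem tendsto_exp_I_mul_nhdsGT_zero :
    Tendsto (fun α : ℝ => exp (I * α)) (𝓝[>] 0) (𝓝[≠] 1) := by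
  refine tendsto_nhdsWithin_of_tendsto_nhds_of_eventually_within _ ?_ ?_
  · have hcont : Continuous fun α : ℝ => exp (I * α) := by fun_prop
    simpa using (hcont.tendsto 0).mono_left nhdsWithin_le_nhds
  · filter_upwards [Ioo_mem_nhdsGT Real.pi_pos] with α hα
    refine mem_compl_singleton_iff.mpr fun h_one => ?_
    have him : (exp (I * α)).im = Real.sin α := by
      rw [mul_comm, exp_ofReal_mul_I_im]
    rw [h_one, one_im] at him
    exact (Real.sin_pos_of_pos_of_lt_pi hα.1 hα.2).ne him

theorem AnalyticOnNhd.eqOn_const_of_eventually_eq_on_arc {g : ℂ → ℂ} {U : Set ℂ}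
    (hg : AnalyticOnNhd ℂ g U) (hU : IsPreconnected U) (h1 : (1 : ℂ) ∈ U)
    (harc : ∀ᶠ α : ℝ in 𝓝[>] 0, g (exp (I * α)) = g 1) :
    EqOn g (fun _ => g 1) U :=
  hg.eqOn_of_preconnected_of_frequently_eq analyticOnNhd_const hU h1
    (tendsto_exp_I_mul_nhdsGT_zero.frequently harc.frequently)

theorem mul_apply_exp_mul_eq {f : ℂ → ℂ} {θ z : ℂ} (h : exp (-θ) * f z = f (exp θ * z)) :
    exp θ * z * f (exp θ * z) = z * f z := by
  rw [← h, show exp θ * z * (exp (-θ) * f z) = exp (θ + -θ) * (z * f z) by rw [exp_add]; ring,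
    add_neg_cancel, exp_zero, one_mul]

theorem rotationally_invariant_field_is_c_div_z
    (f : ℂ → ℂ)
    (hf : ∀ z : ℂ, z ≠ 0 → DifferentiableAt ℂ f z)
    (hrot : ∀ α : ℝ, 0 < α → α < Real.pi →
      ∀ z : ℂ, z ≠ 0 → Complex.exp (-(I * α)) * f z = f (Complex.exp (I * α) * z)) :
    ∃ c : ℂ, ∀ z : ℂ, z ≠ 0 → f z = c / z := by
  set g : ℂ → ℂ := fun z => z * f z
  have hg : AnalyticOnNhd ℂ g {0}ᶜ :=
    DifferentiableOn.analyticOnNhd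
      (fun z hz => (differentiableAt_id.mul (hf z hz)).differentiableWithinAt)
      isOpen_compl_singleton
  have hconn : IsPreconnected ({0}ᶜ : Set ℂ) :=
    (isConnected_compl_singleton_of_one_lt_rank (by simp) 0).isPreconnected
  have harc : ∀ᶠ α : ℝ in 𝓝[>] 0, g (exp (I * α)) = g 1 := by
    filter_upwards [Ioo_mem_nhdsGT Real.pi_pos] with α hα
    simpa [g] using mul_apply_exp_mul_eq (hrot α hα.1 hα.2 1 one_ne_zero)
  have hconst := hg.eqOn_const_of_eventually_eq_on_arc hconn one_ne_zero harc
  exact ⟨g 1, fun z hz => eq_div_of_mul_eq hz ((mul_comm _ _).trans (hconst hz))⟩
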